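/- Let C(x) = ∫_0^x cos(πt²/2) dt and S(x) = ∫_0^x sin(πt²/2) dt. There exists δ > 0 such that the function ρ(b) = (1/b⁴)(C(b)² + S(b)²)² is strictly decreasing on (0, δ). -/

import Mathlib

/-- Normalized Fresnel cosine integral. -/
noncomputable def fresnelC (x : ℝ) : ℝ := ∫ t in (0 : ℝ)..x, Real.cos (Real.pi * t ^ 2 / 2)

/-- Normalized Fresnel sine integral. -/
noncomputable def fresnelS (x : ℝ) : ℝ := ∫ t in (0 : ℝ)..x, Real.sin (Real.pi * t ^ 2 / 2)

/-!
Substituting `t = b u` gives `C(b) + i S(b) = b ∫₀¹ exp (i s u²) du` with `s = π b² / 2`, so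
`ρ(b) = P(s)²` with `P(s) = |∫₀¹ exp (i s u²) du|² = ∫₀¹ ∫₀¹ cos (s (u² - v²)) du dv` (`chirpPower`).
Since `|u² - v²| ≤ 1` on the unit square, the integrand decreases in `s ∈ [0, π]`, strictly away from
the diagonal, so `P` is strictly decreasing on `[0, π]` and positive on `[0, π)`. Hence `ρ` is
strictly decreasing on `(0, √2)`.
-/

open Real Set intervalIntegral

theorem intervalIntegral.integral_sq_add_integral_sq {f g : ℝ → ℝ} (hf : Continuous f)
    (hg : Continuous g) (a b : ℝ) :
    (∫ u in a..b, f u) ^ 2 + (∫ u in a..b, g u) ^ 2 =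
      ∫ u in a..b, ∫ v in a..b, (f u * f v + g u * g v) := by
  have inner (u : ℝ) : ∫ v in a..b, (f u * f v + g u * g v) =
      (f u * ∫ v in a..b, f v) + g u * ∫ v in a..b, g v := by
    rw [integral_add ((hf.intervalIntegrable a b).const_mul _)
      ((hg.intervalIntegrable a b).const_mul _), integral_const_mul, integral_const_mul]
  simp_rw [inner]
  rw [integral_add ((hf.intervalIntegrable a b).mul_const _)
    ((hg.intervalIntegrable a b).mul_const _), integral_mul_const, integral_mul_const]
  ring

theorem intervalIntegral.integral_zero_eq_mul_integral_unit (f : ℝ → ℝ) (b : ℝ) :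
    ∫ t in (0 : ℝ)..b, f t = b * ∫ u in (0 : ℝ)..1, f (b * u) := by
  rw [← smul_eq_mul, smul_integral_comp_mul_left]
  simp

theorem intervalIntegral.integral_lt_integral₂_of_le_of_exists_lt {F G : ℝ → ℝ → ℝ} {a b : ℝ}
    (hab : a < b) (hF : Continuous F.uncurry) (hG : Continuous G.uncurry)
    (hle : ∀ u ∈ Icc a b, ∀ v ∈ Icc a b, F u v ≤ G u v)
    (hlt : ∃ u ∈ Icc a b, ∃ v ∈ Icc a b, F u v < G u v) :
    ∫ u in a..b, ∫ v in a..b, F u v < ∫ u in a..b, ∫ v in a..b, G u v := by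
  have hFc (u : ℝ) : Continuous (F u) := hF.comp (Continuous.prodMk_right u)
  have hGc (u : ℝ) : Continuous (G u) := hG.comp (Continuous.prodMk_right u)
  obtain ⟨u₀, hu₀, v₀, hv₀, hlt₀⟩ := hlt
  refine integral_lt_integral_of_continuousOn_of_le_of_exists_lt hab
    (continuous_parametric_intervalIntegral_of_continuous' hF a b).continuousOn
    (continuous_parametric_intervalIntegral_of_continuous' hG a b).continuousOn
    (fun u hu => integral_mono_on hab.le ((hFc u).intervalIntegrable a b)
      ((hGc u).intervalIntegrable a b) (hle u (Ioc_subset_Icc_self hu)))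
    ⟨u₀, hu₀, integral_lt_integral_of_continuousOn_of_le_of_exists_lt hab
      (hFc u₀).continuousOn (hGc u₀).continuousOn
      (fun v hv => hle u₀ hu₀ v (Ioc_subset_Icc_self hv)) ⟨v₀, hv₀, hlt₀⟩⟩

noncomputable def chirpPower (s : ℝ) : ℝ :=
  ∫ u in (0 : ℝ)..1, ∫ v in (0 : ℝ)..1, cos (s * (u ^ 2 - v ^ 2))

theorem chirpPower_eq (s : ℝ) :
    chirpPower s =
      (∫ u in (0 : ℝ)..1, cos (s * u ^ 2)) ^ 2 + (∫ u in (0 : ℝ)..1, sin (s * u ^ 2)) ^ 2 := by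
  rw [integral_sq_add_integral_sq (by fun_prop) (by fun_prop), chirpPower]
  simp_rw [mul_sub, cos_sub]

theorem chirpPower_nonneg (s : ℝ) : 0 ≤ chirpPower s := by
  rw [chirpPower_eq]; positivity

theorem cos_mul_le_cos_mul {s s' x : ℝ} (hs : 0 ≤ s) (hss' : s ≤ s') (hs' : s' ≤ π)
    (hx : |x| ≤ 1) : cos (s' * x) ≤ cos (s * x) := by
  rw [← cos_abs (s * x), ← cos_abs (s' * x), abs_mul, abs_mul, abs_of_nonneg hs,
    abs_of_nonneg (hs.trans hss')]
  exact cos_le_cos_of_nonneg_of_le_pi (by positivity)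
    (by nlinarith [abs_nonneg x]) (by gcongr)

theorem chirpPower_strictAntiOn : StrictAntiOn chirpPower (Icc 0 π) := by
  intro s hs s' hs' hss'
  refine integral_lt_integral₂_of_le_of_exists_lt one_pos (by fun_prop) (by fun_prop)
    (fun u hu v hv => cos_mul_le_cos_mul hs.1 hss'.le hs'.2 ?_)
    ⟨1, by simp, 0, by simp, ?_⟩
  · rw [abs_le]; constructor <;> nlinarith [hu.1, hu.2, hv.1, hv.2]
  · simpa using cos_lt_cos_of_nonneg_of_le_pi hs.1 hs'.2 hss'

theorem chirpPower_pos {s : ℝ} (hs : s ∈ Ico 0 π) : 0 < chirpPower s :=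
  (chirpPower_nonneg π).trans_lt
    (chirpPower_strictAntiOn ⟨hs.1, hs.2.le⟩ ⟨pi_pos.le, le_rfl⟩ hs.2)

theorem fresnelC_sq_add_fresnelS_sq (b : ℝ) :
    fresnelC b ^ 2 + fresnelS b ^ 2 = b ^ 2 * chirpPower (π * b ^ 2 / 2) := by
  have h (u : ℝ) : π * (b * u) ^ 2 / 2 = π * b ^ 2 / 2 * u ^ 2 := by ring
  rw [fresnelC, fresnelS, integral_zero_eq_mul_integral_unit (fun t => cos (π * t ^ 2 / 2)),
    integral_zero_eq_mul_integral_unit (fun t => sin (π * t ^ 2 / 2)), chirpPower_eq]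
  simp only [h]
  ring

theorem stmt_9 :
    ∃ δ > (0 : ℝ), StrictAntiOn
      (fun b : ℝ => (1 / b ^ 4) * (fresnelC b ^ 2 + fresnelS b ^ 2) ^ 2)
      (Set.Ioo 0 δ) := by
  refine ⟨√2, by positivity, fun b hb b' hb' hbb' => ?_⟩
  have hρ {x : ℝ} (hx : x ≠ 0) : (1 / x ^ 4) * (fresnelC x ^ 2 + fresnelS x ^ 2) ^ 2 =
      chirpPower (π * x ^ 2 / 2) ^ 2 := by
    rw [fresnelC_sq_add_fresnelS_sq]; field_simp
  have hphase {x : ℝ} (hx : x ∈ Ioo 0 √2) : π * x ^ 2 / 2 ∈ Ico 0 π := by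
    have : x ^ 2 < 2 := by simpa using (sq_lt_sq₀ hx.1.le (by positivity)).2 hx.2
    constructor <;> nlinarith [pi_pos]
  have hss' : π * b ^ 2 / 2 < π * b' ^ 2 / 2 := by gcongr; exact hb.1.le
  simp only [hρ hb.1.ne', hρ hb'.1.ne']
  exact pow_lt_pow_left₀ (chirpPower_strictAntiOn (Ico_subset_Icc_self (hphase hb))
    (Ico_subset_Icc_self (hphase hb')) hss') (chirpPower_pos (hphase hb')).le two_ne_zero
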